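/- For every extended LTL formula φ there exists an equivalent extended LTL formula φ' in 1-form such that ‖φ'‖ ≤ 4^{2‖φ‖} · ‖φ‖. Moreover, for every subformula GF ψ of φ' the formula ψ is a subformula of φ, and every FG-subformula of φ' is also a subformula of φ. -/

import Mathlib

namespace ExtLTL

/-- Extended LTL formulas, with the limit operators `GF` and `FG` as atomic
operators. -/
inductive E (Ap : Type) : Type
  | tt    : E Ap
  | ff    : E Ap
  | pos   : Ap → E Ap
  | nlit  : Ap → E Ap
  | and   : E Ap → E Ap → E Ap
  | or    : E Ap → E Ap → E Ap
  | next  : E Ap → E Ap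
  | untl  : E Ap → E Ap → E Ap
  | wuntl : E Ap → E Ap → E Ap
  | gf    : E Ap → E Ap
  | fg    : E Ap → E Ap
  deriving DecidableEq

/-- Infinite words over the alphabet `2^Ap`. -/
abbrev Word (Ap : Type) := ℕ → Set Ap

/-- Suffix of a word starting at position `i`. -/
def suff {Ap : Type} (w : Word Ap) (i : ℕ) : Word Ap := fun n => w (n + i)

/-- Satisfaction relation for extended LTL. -/
def Sat {Ap : Type} : Word Ap → E Ap → Prop
  | _, E.tt => True
  | _, E.ff => False
  | w, E.pos a => a ∈ w 0
  | w, E.nlit a => a ∉ w 0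
  | w, E.and φ ψ => Sat w φ ∧ Sat w ψ
  | w, E.or φ ψ => Sat w φ ∨ Sat w ψ
  | w, E.next φ => Sat (suff w 1) φ
  | w, E.untl φ ψ => ∃ k, Sat (suff w k) ψ ∧ ∀ j < k, Sat (suff w j) φ
  | w, E.wuntl φ ψ => (∀ k, Sat (suff w k) φ) ∨ ∃ k, Sat (suff w k) ψ ∧ ∀ j < k, Sat (suff w j) φ
  | w, E.gf φ => ∀ i : ℕ, ∃ j : ℕ, i ≤ j ∧ Sat (suff w j) φ
  | w, E.fg φ => ∃ i : ℕ, ∀ j : ℕ, i ≤ j → Sat (suff w j) φ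

/-- Equivalence of extended LTL formulas. -/
def Equiv {Ap : Type} (φ ψ : E Ap) : Prop := ∀ w : Word Ap, Sat w φ ↔ Sat w ψ

/-- G φ := φ W ff. -/
def Gf {Ap : Type} (φ : E Ap) : E Ap := E.wuntl φ E.ff

/-- Number of nodes of the syntax tree. -/
def size {Ap : Type} : E Ap → ℕ
  | E.tt => 1
  | E.ff => 1
  | E.pos _ => 1
  | E.nlit _ => 1
  | E.and φ ψ => size φ + size ψ + 1
  | E.or φ ψ => size φ + size ψ + 1
  | E.next φ => size φ + 1
  | E.untl φ ψ => size φ + size ψ + 1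
  | E.wuntl φ ψ => size φ + size ψ + 1
  | E.gf φ => size φ + 1
  | E.fg φ => size φ + 1

variable {Ap : Type} [DecidableEq Ap]

/-- The set of subformulas of an extended LTL formula. -/
def sf : E Ap → Finset (E Ap)
  | E.tt => {E.tt}
  | E.ff => {E.ff}
  | E.pos a => {E.pos a}
  | E.nlit a => {E.nlit a}
  | E.and φ ψ => insert (E.and φ ψ) (sf φ ∪ sf ψ)
  | E.or φ ψ => insert (E.or φ ψ) (sf φ ∪ sf ψ)
  | E.next φ => insert (E.next φ) (sf φ)
  | E.untl φ ψ => insert (E.untl φ ψ) (sf φ ∪ sf ψ)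
  | E.wuntl φ ψ => insert (E.wuntl φ ψ) (sf φ ∪ sf ψ)
  | E.gf φ => insert (E.gf φ) (sf φ)
  | E.fg φ => insert (E.fg φ) (sf φ)

/-- Number of `U`-nodes of the syntax tree that are not below any limit node. -/
def uNL : E Ap → ℕ
  | E.untl φ ψ => uNL φ + uNL ψ + 1
  | E.wuntl φ ψ => uNL φ + uNL ψ
  | E.and φ ψ => uNL φ + uNL ψ
  | E.or φ ψ => uNL φ + uNL ψ
  | E.next φ => uNL φ
  | E.gf _ => 0
  | E.fg _ => 0
  | _ => 0

/-- `ubw φ`: number of `U`-nodes of the syntax tree of `φ` that are below some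
`W`-node but not below any limit node. -/
def ubw : E Ap → ℕ
  | E.wuntl φ ψ => uNL φ + uNL ψ
  | E.untl φ ψ => ubw φ + ubw ψ
  | E.and φ ψ => ubw φ + ubw ψ
  | E.or φ ψ => ubw φ + ubw ψ
  | E.next φ => ubw φ
  | E.gf _ => 0
  | E.fg _ => 0
  | _ => 0

/-- Is the formula a limit (`GF`- or `FG`-) formula? -/
def isLimit : E Ap → Bool
  | E.gf _ => true
  | E.fg _ => true
  | _ => false

/-- Limit subformulas of a formula. -/
def lims (φ : E Ap) : Finset (E Ap) := (sf φ).filter fun ψ => isLimit ψ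

/-- The set of distinct limit subformulas of `φ` that are proper subformulas of
some temporal subformula of `φ`. -/
def gfbaSet : E Ap → Finset (E Ap)
  | E.and φ ψ => gfbaSet φ ∪ gfbaSet ψ
  | E.or φ ψ => gfbaSet φ ∪ gfbaSet ψ
  | E.next φ => lims φ ∪ gfbaSet φ
  | E.untl φ ψ => (lims φ ∪ lims ψ) ∪ (gfbaSet φ ∪ gfbaSet ψ)
  | E.wuntl φ ψ => (lims φ ∪ lims ψ) ∪ (gfbaSet φ ∪ gfbaSet ψ)
  | E.gf φ => lims φ ∪ gfbaSet φ
  | E.fg φ => lims φ ∪ gfbaSet φ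
  | _ => ∅

/-- `gfba φ`: number of distinct limit subformulas of `φ` that are proper
subformulas of some temporal subformula of `φ`. -/
def gfba (φ : E Ap) : ℕ := (gfbaSet φ).card

end ExtLTL

/-!
Formulas are rewritten bottom-up, and the only node needing work is `α W β ≡ α U β ∨ G α`.
To put `G α` into 1-form, guess the set `M` of those `U`-subformulas `β' U γ` of `α` outside
limit operators whose right-hand side `γ` holds infinitely often. From some point on the other
right-hand sides never hold again, and from then on `α` is equivalent to its weakening: replace
`β' U γ` by `β' W γ` if it is in `M` and by `ff` otherwise. Conversely, the weakening implies
`α` wherever every `γ` of `M` holds infinitely often. Hence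
`G α ≡ α U ⋁_M (G (weakening of α by M) ∧ ⋀_{(β', γ) ∈ M} GF γ)`,
in which no `U` lies below a `W`. There are at most `2^‖α‖` disjuncts, each of size
`O(‖α‖²)`, and the only new limit formulas are the `GF γ`, with `γ` a subformula of `α`.
-/

namespace ExtLTL

variable {Ap : Type}

@[simp] lemma suff_suff (w : Word Ap) (i k : ℕ) : suff (suff w i) k = suff w (k + i) := by
  funext n; simp [suff, Nat.add_assoc]

lemma sat_Gf {w : Word Ap} {φ : E Ap} : Sat w (Gf φ) ↔ ∀ k, Sat (suff w k) φ := by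
  simp [Gf, Sat]

lemma sat_gf_suff {w : Word Ap} {φ : E Ap} (h : Sat w (E.gf φ)) (i : ℕ) :
    Sat (suff w i) (E.gf φ) := by
  intro n
  obtain ⟨j, hj, hφ⟩ := h (n + i)
  refine ⟨j - i, by omega, ?_⟩
  rwa [suff_suff, Nat.sub_add_cancel (by omega)]

def disj : List (E Ap) → E Ap := List.foldr E.or E.ff

def conj : List (E Ap) → E Ap := List.foldr E.and E.tt

lemma sat_disj {w : Word Ap} {l : List (E Ap)} : Sat w (disj l) ↔ ∃ x ∈ l, Sat w x := by
  induction l with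
  | nil => simp [disj, Sat]
  | cons a t ih => simp_all [disj, Sat]

lemma sat_conj {w : Word Ap} {l : List (E Ap)} : Sat w (conj l) ↔ ∀ x ∈ l, Sat w x := by
  induction l with
  | nil => simp [conj, Sat]
  | cons a t ih => simp_all [conj, Sat]

lemma size_disj_le {l : List (E Ap)} {c : ℕ} (h : ∀ x ∈ l, size x ≤ c) :
    size (disj l) ≤ l.length * (c + 1) + 1 := by
  induction l with
  | nil => simp [disj, size]
  | cons a t ih =>
    simp only [List.forall_mem_cons] at h
    have := ih h.2
    simp only [disj, List.foldr, size, List.length_cons] at this ⊢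
    nlinarith [h.1]

lemma size_conj_le {l : List (E Ap)} {c : ℕ} (h : ∀ x ∈ l, size x ≤ c) :
    size (conj l) ≤ l.length * (c + 1) + 1 := by
  induction l with
  | nil => simp [conj, size]
  | cons a t ih =>
    simp only [List.forall_mem_cons] at h
    have := ih h.2
    simp only [conj, List.foldr, size, List.length_cons] at this ⊢
    nlinarith [h.1]

lemma ubw_disj {l : List (E Ap)} (h : ∀ x ∈ l, ubw x = 0) : ubw (disj l) = 0 := by
  induction l with
  | nil => rfl
  | cons a t ih =>
    simp only [List.forall_mem_cons] at h
    simpa [disj, ubw, h.1] using ih h.2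

lemma ubw_conj {l : List (E Ap)} (h : ∀ x ∈ l, ubw x = 0) : ubw (conj l) = 0 := by
  induction l with
  | nil => rfl
  | cons a t ih =>
    simp only [List.forall_mem_cons] at h
    simpa [conj, ubw, h.1] using ih h.2

def blowup (n : ℕ) : ℕ := 4 ^ (2 * n) * n

-- the size recurrence of `oneForm` at a `W`-node, `D` being the size of `gExpansion`
lemma wuntl_le_blowup {a b A B D : ℕ} (hA : A ≤ blowup a) (hB : B ≤ blowup b)
    (hD : D ≤ 8 ^ (a + 1)) : 2 * A + B + D + 3 ≤ blowup (a + b + 1) := by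
  have hu : 1 ≤ 4 ^ (2 * a) := Nat.one_le_pow _ _ (by norm_num)
  have hv : 1 ≤ 4 ^ (2 * b) := Nat.one_le_pow _ _ (by norm_num)
  have h8 : 8 ^ (a + 1) ≤ 8 * 4 ^ (2 * a) := by
    rw [pow_succ, pow_mul, mul_comm]
    exact Nat.mul_le_mul_left 8 (Nat.pow_le_pow_left (by norm_num) a)
  have hsplit : 4 ^ (2 * (a + b + 1)) = 4 ^ (2 * a) * 4 ^ (2 * b) * 16 := by ring
  unfold blowup at *
  rw [hsplit]
  nlinarith [Nat.mul_le_mul hu hv, Nat.mul_le_mul_left (4 ^ (2 * a)) hv,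
    Nat.mul_le_mul_right (4 ^ (2 * b)) hu]

lemma le_blowup (n : ℕ) : n ≤ blowup n :=
  Nat.le_mul_of_pos_left n (by positivity)

lemma add_le_blowup {a b A B : ℕ} (hA : A ≤ blowup a) (hB : B ≤ blowup b) :
    A + B + 1 ≤ blowup (a + b + 1) :=
  le_trans (by omega) (wuntl_le_blowup hA hB (Nat.zero_le _))

variable [DecidableEq Ap]

lemma mem_sf_self (φ : E Ap) : φ ∈ sf φ := by
  cases φ <;> simp [sf]

lemma sf_subset_of_mem {χ δ : E Ap} (h : χ ∈ sf δ) : sf χ ⊆ sf δ := by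
  induction δ with
  | and φ ψ ihφ ihψ | or φ ψ ihφ ihψ | untl φ ψ ihφ ihψ | wuntl φ ψ ihφ ihψ =>
    simp only [sf, Finset.mem_insert, Finset.mem_union] at h
    rcases h with rfl | h | h
    · rfl
    · exact (ihφ h).trans (Finset.subset_union_left.trans (Finset.subset_insert _ _))
    · exact (ihψ h).trans (Finset.subset_union_right.trans (Finset.subset_insert _ _))
  | next φ ih | gf φ ih | fg φ ih =>
    simp only [sf, Finset.mem_insert] at h
    rcases h with rfl | h
    · rfl
    · exact (ih h).trans (Finset.subset_insert _ _)
  | _ => simp only [sf, Finset.mem_singleton] at h; rw [h]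

lemma size_le_of_mem_sf {χ δ : E Ap} (h : χ ∈ sf δ) : size χ ≤ size δ := by
  induction δ with
  | and φ ψ ihφ ihψ | or φ ψ ihφ ihψ | untl φ ψ ihφ ihψ | wuntl φ ψ ihφ ihψ =>
    simp only [sf, Finset.mem_insert, Finset.mem_union] at h
    rcases h with rfl | h | h
    · rfl
    · have := ihφ h; simp only [size]; omega
    · have := ihψ h; simp only [size]; omega
  | next φ ih | gf φ ih | fg φ ih =>
    simp only [sf, Finset.mem_insert] at h
    rcases h with rfl | h
    · rfl
    · have := ih h; simp only [size]; omega
  | _ => simp only [sf, Finset.mem_singleton] at h; rw [h]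

section lims

variable (φ ψ : E Ap)

@[simp] lemma lims_tt : lims (E.tt : E Ap) = ∅ := rfl
@[simp] lemma lims_ff : lims (E.ff : E Ap) = ∅ := rfl
@[simp] lemma lims_and : lims (E.and φ ψ) = lims φ ∪ lims ψ := by
  rw [lims, sf, Finset.filter_insert, if_neg (by simp [isLimit]), Finset.filter_union]; rfl
@[simp] lemma lims_or : lims (E.or φ ψ) = lims φ ∪ lims ψ := by
  rw [lims, sf, Finset.filter_insert, if_neg (by simp [isLimit]), Finset.filter_union]; rfl
@[simp] lemma lims_next : lims (E.next φ) = lims φ := by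
  rw [lims, sf, Finset.filter_insert, if_neg (by simp [isLimit])]; rfl
@[simp] lemma lims_untl : lims (E.untl φ ψ) = lims φ ∪ lims ψ := by
  rw [lims, sf, Finset.filter_insert, if_neg (by simp [isLimit]), Finset.filter_union]; rfl
@[simp] lemma lims_wuntl : lims (E.wuntl φ ψ) = lims φ ∪ lims ψ := by
  rw [lims, sf, Finset.filter_insert, if_neg (by simp [isLimit]), Finset.filter_union]; rfl
@[simp] lemma lims_gf : lims (E.gf φ) = insert (E.gf φ) (lims φ) := by
  rw [lims, sf, Finset.filter_insert, if_pos (by simp [isLimit])]; rfl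

end lims

lemma lims_disj_subset {l : List (E Ap)} {s : Finset (E Ap)} (h : ∀ x ∈ l, lims x ⊆ s) :
    lims (disj l) ⊆ s := by
  induction l with
  | nil => simp [disj]
  | cons a t ih =>
    simp only [List.forall_mem_cons] at h
    simpa [disj] using Finset.union_subset h.1 (ih h.2)

lemma lims_conj_subset {l : List (E Ap)} {s : Finset (E Ap)} (h : ∀ x ∈ l, lims x ⊆ s) :
    lims (conj l) ⊆ s := by
  induction l with
  | nil => simp [conj]
  | cons a t ih =>
    simp only [List.forall_mem_cons] at h
    simpa [conj] using Finset.union_subset h.1 (ih h.2)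

def untils : E Ap → Finset (E Ap × E Ap)
  | E.untl φ ψ => insert (φ, ψ) (untils φ ∪ untils ψ)
  | E.wuntl φ ψ | E.and φ ψ | E.or φ ψ => untils φ ∪ untils ψ
  | E.next φ => untils φ
  | _ => ∅

def weaken (M : Finset (E Ap × E Ap)) : E Ap → E Ap
  | E.untl φ ψ => if (φ, ψ) ∈ M then E.wuntl (weaken M φ) (weaken M ψ) else E.ff
  | E.wuntl φ ψ => E.wuntl (weaken M φ) (weaken M ψ)
  | E.and φ ψ => E.and (weaken M φ) (weaken M ψ)
  | E.or φ ψ => E.or (weaken M φ) (weaken M ψ)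
  | E.next φ => E.next (weaken M φ)
  | φ => φ

lemma untl_mem_sf_of_mem_untils {δ φ ψ : E Ap} (h : (φ, ψ) ∈ untils δ) :
    E.untl φ ψ ∈ sf δ := by
  induction δ with
  | untl α β ihα ihβ =>
    simp only [untils, Finset.mem_insert, Finset.mem_union, Prod.mk.injEq] at h
    rcases h with ⟨rfl, rfl⟩ | h | h <;> simp [sf, *]
  | and α β ihα ihβ | or α β ihα ihβ | wuntl α β ihα ihβ =>
    simp only [untils, Finset.mem_union] at h
    rcases h with h | h <;> simp [sf, *]
  | next α ih => simp [sf, ih h]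
  | _ => simp [untils] at h

lemma card_untils_le (δ : E Ap) : (untils δ).card ≤ size δ := by
  induction δ with
  | untl α β ihα ihβ =>
    grw [untils, Finset.card_insert_le, Finset.card_union_le]; simp only [size]; omega
  | and α β ihα ihβ | or α β ihα ihβ | wuntl α β ihα ihβ =>
    grw [untils, Finset.card_union_le]; simp only [size]; omega
  | next α ih => simp only [untils, size]; omega
  | _ => simp [untils, size]

lemma size_weaken_le (M : Finset (E Ap × E Ap)) (δ : E Ap) : size (weaken M δ) ≤ size δ := by
  induction δ with
  | untl α β ihα ihβ =>
    simp only [weaken]; split <;> simp only [size] <;> omega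
  | and α β ihα ihβ | or α β ihα ihβ | wuntl α β ihα ihβ =>
    simp only [weaken, size]; omega
  | next α ih => simp only [weaken, size]; omega
  | _ => simp [weaken]

lemma uNL_weaken (M : Finset (E Ap × E Ap)) (δ : E Ap) : uNL (weaken M δ) = 0 := by
  induction δ with
  | untl α β ihα ihβ => simp only [weaken]; split <;> simp [uNL, *]
  | and α β ihα ihβ | or α β ihα ihβ | wuntl α β ihα ihβ | next α ihα =>
    simp [weaken, uNL, *]
  | _ => simp [weaken, uNL]

lemma lims_weaken_subset (M : Finset (E Ap × E Ap)) (δ : E Ap) :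
    lims (weaken M δ) ⊆ lims δ := by
  induction δ with
  | untl α β ihα ihβ => simp only [weaken]; split <;> simp [Finset.union_subset_union, *]
  | and α β ihα ihβ | or α β ihα ihβ | wuntl α β ihα ihβ =>
    simp [weaken, Finset.union_subset_union, *]
  | next α ih => simpa [weaken]
  | _ => simp [weaken]

lemma sat_of_sat_weaken {M : Finset (E Ap × E Ap)} {w : Word Ap}
    (hM : ∀ pq ∈ M, Sat w (E.gf pq.2)) (δ : E Ap) (i : ℕ) :
    Sat (suff w i) (weaken M δ) → Sat (suff w i) δ := by
  induction δ generalizing i with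
  | untl α β ihα ihβ =>
    simp only [weaken]
    split
    case isTrue hαβ =>
      simp only [Sat, suff_suff]
      rintro (hG | ⟨k, hk, hpre⟩)
      · obtain ⟨j, hij, hj⟩ := hM _ hαβ i
        refine ⟨j - i, ?_, fun k _ => ihα _ (hG k)⟩
        rwa [Nat.sub_add_cancel hij]
      · exact ⟨k, ihβ _ hk, fun j hj => ihα _ (hpre j hj)⟩
    case isFalse => simp [Sat]
  | wuntl α β ihα ihβ =>
    simp only [weaken, Sat, suff_suff]
    rintro (hG | ⟨k, hk, hpre⟩)
    · exact Or.inl fun k => ihα _ (hG k)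
    · exact Or.inr ⟨k, ihβ _ hk, fun j hj => ihα _ (hpre j hj)⟩
  | and α β ihα ihβ => simp only [weaken, Sat]; exact And.imp (ihα i) (ihβ i)
  | or α β ihα ihβ => simp only [weaken, Sat]; exact Or.imp (ihα i) (ihβ i)
  | next α ih => simp only [weaken, Sat, suff_suff]; exact ih _
  | _ => exact id

lemma sat_weaken_of_sat {M : Finset (E Ap × E Ap)} {w : Word Ap} (δ : E Ap)
    (hM : ∀ pq ∈ untils δ, pq ∉ M → ∀ j, ¬ Sat (suff w j) pq.2) (i : ℕ) :
    Sat (suff w i) δ → Sat (suff w i) (weaken M δ) := by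
  induction δ generalizing i with
  | untl α β ihα ihβ =>
    simp only [untils, Finset.forall_mem_insert, Finset.forall_mem_union] at hM
    obtain ⟨hαβ, hMα, hMβ⟩ := hM
    simp only [Sat, weaken, suff_suff]
    rintro ⟨k, hk, hpre⟩
    split
    case isTrue =>
      simp only [Sat, suff_suff]
      exact Or.inr ⟨k, ihβ hMβ _ hk, fun j hj => ihα hMα _ (hpre j hj)⟩
    case isFalse hmem => exact hαβ hmem _ hk
  | wuntl α β ihα ihβ =>
    simp only [untils, Finset.forall_mem_union] at hM
    simp only [weaken, Sat, suff_suff]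
    rintro (hG | ⟨k, hk, hpre⟩)
    · exact Or.inl fun k => ihα hM.1 _ (hG k)
    · exact Or.inr ⟨k, ihβ hM.2 _ hk, fun j hj => ihα hM.1 _ (hpre j hj)⟩
  | and α β ihα ihβ =>
    simp only [untils, Finset.forall_mem_union] at hM
    exact And.imp (ihα hM.1 i) (ihβ hM.2 i)
  | or α β ihα ihβ =>
    simp only [untils, Finset.forall_mem_union] at hM
    exact Or.imp (ihα hM.1 i) (ihβ hM.2 i)
  | next α ih => simp only [weaken, Sat, suff_suff]; exact ih hM _
  | _ => exact id

noncomputable def gDisjunct (α : E Ap) (M : Finset (E Ap × E Ap)) : E Ap :=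
  E.and (Gf (weaken M α)) (conj (M.toList.map fun pq => E.gf pq.2))

noncomputable def gExpansion (α : E Ap) : E Ap :=
  disj ((untils α).powerset.toList.map (gDisjunct α))

lemma sat_gDisjunct {w : Word Ap} {α : E Ap} {M : Finset (E Ap × E Ap)} :
    Sat w (gDisjunct α M) ↔
      (∀ k, Sat (suff w k) (weaken M α)) ∧ ∀ pq ∈ M, Sat w (E.gf pq.2) := by
  simp only [gDisjunct, Sat, sat_Gf, sat_conj, List.forall_mem_map, Finset.mem_toList]

lemma sat_Gf_iff_sat_untl_gExpansion (α : E Ap) (w : Word Ap) :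
    Sat w (Gf α) ↔ Sat w (E.untl α (gExpansion α)) := by
  classical
  simp only [sat_Gf, Sat, gExpansion, sat_disj, List.mem_map, Finset.mem_toList,
    Finset.mem_powerset]
  constructor
  · intro hG
    let M := (untils α).filter fun pq => Sat w (E.gf pq.2)
    obtain ⟨i, hi⟩ :
        ∃ i, ∀ j ≥ i, ∀ pq ∈ untils α, pq ∉ M → ¬ Sat (suff w j) pq.2 := by
      rw [← Filter.eventually_atTop, Filter.eventually_all_finset]
      intro pq hpq
      rw [Filter.eventually_imp_distrib_left]
      intro hpqM
      have : ¬ Sat w (E.gf pq.2) := fun h => hpqM (Finset.mem_filter.2 ⟨hpq, h⟩)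
      simp only [Sat, not_forall, not_exists, not_and] at this
      exact Filter.eventually_atTop.2 this
    refine ⟨i, ⟨gDisjunct α M, ⟨M, Finset.filter_subset _ _, rfl⟩, ?_⟩,
      fun j _ => hG j⟩
    refine sat_gDisjunct.2
      ⟨fun k => ?_, fun pq hpq => sat_gf_suff (Finset.mem_filter.1 hpq).2 i⟩
    refine sat_weaken_of_sat α (fun pq hpq hpqM j => ?_) k ?_
    · simpa using hi (j + i) (by omega) pq hpq hpqM
    · simpa using hG (k + i)
  · rintro ⟨k, ⟨_, ⟨M, -, rfl⟩, hM⟩, hpre⟩ j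
    obtain ⟨hweak, hgf⟩ := sat_gDisjunct.1 hM
    rcases lt_or_ge j k with hj | hj
    · exact hpre j hj
    · have := sat_of_sat_weaken hgf α (j - k) (hweak (j - k))
      rwa [suff_suff, Nat.sub_add_cancel hj] at this

lemma size_gDisjunct_le {α : E Ap} {M : Finset (E Ap × E Ap)} (hM : M ⊆ untils α) :
    size (gDisjunct α M) ≤ (size α + 2) ^ 2 := by
  have hconj : size (conj (M.toList.map fun pq => E.gf pq.2)) ≤ size α * (size α + 1) + 1 := by
    refine (size_conj_le (c := size α) ?_).trans ?_
    · simp only [List.forall_mem_map, Finset.mem_toList]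
      intro pq hpq
      have := size_le_of_mem_sf (untl_mem_sf_of_mem_untils (hM hpq))
      simp only [size] at this ⊢
      omega
    · simp only [List.length_map, Finset.length_toList]
      grw [Finset.card_le_card hM, card_untils_le]
  have := size_weaken_le M α
  simp only [gDisjunct, Gf, size] at hconj ⊢
  nlinarith

lemma size_gExpansion_le (α : E Ap) : size (gExpansion α) ≤ 8 ^ (size α + 1) := by
  set a := size α
  have hdisj : size (gExpansion α) ≤ 2 ^ a * ((a + 2) ^ 2 + 1) + 1 := by
    refine (size_disj_le (c := (a + 2) ^ 2) ?_).trans ?_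
    · simp only [List.forall_mem_map, Finset.mem_toList, Finset.mem_powerset]
      exact fun M hM => size_gDisjunct_le hM
    · simp only [List.length_map, Finset.length_toList, Finset.card_powerset]
      gcongr
      exacts [one_le_two, card_untils_le α]
  have ha : a + 2 ≤ 2 * 2 ^ a := by
    have := Nat.lt_two_pow_self (n := a + 1); rw [pow_succ] at this; omega
  have h8 : 8 ^ (a + 1) = 8 * (2 ^ a) ^ 3 := by
    rw [← pow_mul, pow_succ, mul_comm, mul_comm a, pow_mul]; norm_num
  have h1 : 1 ≤ 2 ^ a := Nat.one_le_two_pow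
  have hsq := Nat.mul_le_mul_left (2 ^ a) (Nat.pow_le_pow_left ha 2)
  rw [h8]
  generalize 2 ^ a = x at *
  nlinarith

lemma ubw_gExpansion (α : E Ap) : ubw (gExpansion α) = 0 := by
  refine ubw_disj fun x hx => ?_
  obtain ⟨M, -, rfl⟩ := List.mem_map.1 hx
  have hconj : ubw (conj (M.toList.map fun pq => E.gf pq.2)) = 0 :=
    ubw_conj (List.forall_mem_map.2 fun _ _ => rfl)
  simp [gDisjunct, Gf, ubw, uNL, uNL_weaken, hconj]

lemma lims_subset_of_mem_sf {χ δ : E Ap} (h : χ ∈ sf δ) : lims χ ⊆ lims δ :=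
  Finset.filter_subset_filter _ (sf_subset_of_mem h)

def admissibleLims (φ : E Ap) : Finset (E Ap) := lims φ ∪ (sf φ).image E.gf

lemma admissibleLims_subset_of_mem_sf {χ δ : E Ap} (h : χ ∈ sf δ) :
    admissibleLims χ ⊆ admissibleLims δ :=
  Finset.union_subset_union (lims_subset_of_mem_sf h)
    (Finset.image_subset_image (sf_subset_of_mem h))

lemma lims_gExpansion_subset (α : E Ap) : lims (gExpansion α) ⊆ admissibleLims α := by
  refine lims_disj_subset fun x hx => ?_
  obtain ⟨M, hM, rfl⟩ := List.mem_map.1 hx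
  rw [Finset.mem_toList, Finset.mem_powerset] at hM
  have hconj : lims (conj (M.toList.map fun pq => E.gf pq.2)) ⊆ admissibleLims α := by
    refine lims_conj_subset ?_
    simp only [List.forall_mem_map, Finset.mem_toList, lims_gf]
    intro pq hpq
    have hq : pq.2 ∈ sf α :=
      sf_subset_of_mem (untl_mem_sf_of_mem_untils (hM hpq)) (by simp [sf, mem_sf_self])
    exact Finset.insert_subset (by simp [admissibleLims, hq])
      ((lims_subset_of_mem_sf hq).trans Finset.subset_union_left)
  simp only [gDisjunct, Gf, lims_and, lims_wuntl, lims_ff, Finset.union_empty]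
  exact Finset.union_subset ((lims_weaken_subset M α).trans Finset.subset_union_left) hconj

noncomputable def oneForm : E Ap → E Ap
  | E.and φ ψ => E.and (oneForm φ) (oneForm ψ)
  | E.or φ ψ => E.or (oneForm φ) (oneForm ψ)
  | E.next φ => E.next (oneForm φ)
  | E.untl φ ψ => E.untl (oneForm φ) (oneForm ψ)
  | E.wuntl φ ψ => E.or (E.untl (oneForm φ) (oneForm ψ)) (E.untl (oneForm φ) (gExpansion φ))
  | φ => φ

lemma sat_oneForm (φ : E Ap) (w : Word Ap) : Sat w (oneForm φ) ↔ Sat w φ := by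
  induction φ generalizing w with
  | and α β ihα ihβ | or α β ihα ihβ | untl α β ihα ihβ =>
    simp only [oneForm, Sat, ihα, ihβ]
  | next α ih => simp only [oneForm, Sat, ih]
  | wuntl α β ihα ihβ =>
    have hG := sat_Gf_iff_sat_untl_gExpansion α w
    simp only [sat_Gf, Sat] at hG
    simp only [oneForm, Sat, ihα, ihβ, ← hG]
    exact or_comm
  | _ => rfl

lemma ubw_oneForm (φ : E Ap) : ubw (oneForm φ) = 0 := by
  induction φ with
  | and _ _ ihα ihβ | or _ _ ihα ihβ | untl _ _ ihα ihβ => simp [oneForm, ubw, ihα, ihβ]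
  | next _ ih => simp [oneForm, ubw, ih]
  | wuntl α _ ihα ihβ => simp [oneForm, ubw, ubw_gExpansion, ihα, ihβ]
  | _ => rfl

lemma size_oneForm_le (φ : E Ap) : size (oneForm φ) ≤ blowup (size φ) := by
  induction φ with
  | and _ _ ihα ihβ | or _ _ ihα ihβ | untl _ _ ihα ihβ => exact add_le_blowup ihα ihβ
  | next _ ih => exact add_le_blowup ih (Nat.zero_le (blowup 0))
  | wuntl α _ ihα ihβ =>
    have := wuntl_le_blowup ihα ihβ (size_gExpansion_le α)
    simp only [oneForm, size] at this ⊢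
    omega
  | _ => exact le_blowup _

lemma lims_oneForm_subset (φ : E Ap) : lims (oneForm φ) ⊆ admissibleLims φ := by
  induction φ with
  | and α β ihα ihβ | or α β ihα ihβ | untl α β ihα ihβ =>
    simp only [oneForm, lims_and, lims_or, lims_untl]
    exact Finset.union_subset
      (ihα.trans (admissibleLims_subset_of_mem_sf (by simp [sf, mem_sf_self])))
      (ihβ.trans (admissibleLims_subset_of_mem_sf (by simp [sf, mem_sf_self])))
  | next α ih =>
    simpa only [oneForm, lims_next] using
      ih.trans (admissibleLims_subset_of_mem_sf (by simp [sf, mem_sf_self]))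
  | wuntl α β ihα ihβ =>
    have hα : lims (oneForm α) ⊆ admissibleLims (E.wuntl α β) :=
      ihα.trans (admissibleLims_subset_of_mem_sf (by simp [sf, mem_sf_self]))
    have hβ : lims (oneForm β) ⊆ admissibleLims (E.wuntl α β) :=
      ihβ.trans (admissibleLims_subset_of_mem_sf (by simp [sf, mem_sf_self]))
    have hG : lims (gExpansion α) ⊆ admissibleLims (E.wuntl α β) :=
      (lims_gExpansion_subset α).trans
        (admissibleLims_subset_of_mem_sf (by simp [sf, mem_sf_self]))
    simp only [oneForm, lims_or, lims_untl, Finset.union_subset_iff]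
    exact ⟨⟨hα, hβ⟩, hα, hG⟩
  | _ => exact Finset.subset_union_left

theorem stage1_oneForm_general {Ap : Type} [DecidableEq Ap] (φ : E Ap) :
    ∃ φ' : E Ap,
      Equiv φ φ' ∧
      ubw φ' = 0 ∧
      size φ' ≤ 4 ^ (2 * size φ) * size φ ∧
      (∀ ψ : E Ap, E.gf ψ ∈ sf φ' → ψ ∈ sf φ) ∧
      (∀ ψ : E Ap, E.fg ψ ∈ sf φ' → E.fg ψ ∈ sf φ) := by
  have hadm : ∀ {χ}, χ ∈ sf (oneForm φ) → isLimit χ →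
      χ ∈ lims φ ∨ χ ∈ (sf φ).image E.gf := fun hχ hlim =>
    Finset.mem_union.1 (lims_oneForm_subset φ (Finset.mem_filter.2 ⟨hχ, hlim⟩))
  refine ⟨oneForm φ, fun w => (sat_oneForm φ w).symm, ubw_oneForm φ, size_oneForm_le φ,
    fun ψ hψ => ?_, fun ψ hψ => ?_⟩
  · rcases hadm hψ rfl with h | h
    · exact sf_subset_of_mem (Finset.mem_filter.1 h).1 (by simp [sf, mem_sf_self])
    · obtain ⟨q, hq, hqψ⟩ := Finset.mem_image.1 h
      exact E.gf.inj hqψ ▸ hq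
  · rcases hadm hψ rfl with h | h
    · exact (Finset.mem_filter.1 h).1
    · obtain ⟨q, -, ⟨⟩⟩ := Finset.mem_image.1 h

/-- Stage 1: every extended LTL formula `φ` has an equivalent
formula `φ'` in 1-form with `‖φ'‖ ≤ 4^{2‖φ‖}·‖φ‖`; moreover for every
subformula `GF ψ` of `φ'` the formula `ψ` is a subformula of `φ`, and every
`FG`-subformula of `φ'` is a subformula of `φ`. -/
theorem stage1_oneForm {Ap : Type} [Fintype Ap] [DecidableEq Ap] (φ : E Ap) :
    ∃ φ' : E Ap,
      Equiv φ φ' ∧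
      ubw φ' = 0 ∧
      size φ' ≤ 4 ^ (2 * size φ) * size φ ∧
      (∀ ψ : E Ap, E.gf ψ ∈ sf φ' → ψ ∈ sf φ) ∧
      (∀ ψ : E Ap, E.fg ψ ∈ sf φ' → E.fg ψ ∈ sf φ) :=
  stage1_oneForm_general φ

end ExtLTL
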